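/- If φ: ℝⁿ → ℝ is of class C^k on all of ℝⁿ and positively homogeneous of degree k ≥ 0 (an integer), then φ is a polynomial of degree k (in fact a homogeneous polynomial of degree k). -/

import Mathlib

/-!
Restricted to a ray `t ↦ φ (t • v)`, homogeneity says `φ (t • v) = t ^ k * φ v` for `t > 0`, so the
`k`-th derivative along the ray is the constant `k! * φ v` on `(0, ∞)`. Since `φ` is `C^k`, that
derivative is continuous up to `t = 0`, where it equals the `k`-th Fréchet derivative of `φ` at the
origin evaluated on the diagonal `(v, …, v)`. Hence `φ` is `1 / k!` times the diagonal of a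
`k`-linear form, and expanding `v` in the standard basis makes this a homogeneous polynomial of
degree `k`.
-/

open MvPolynomial

section Ray

variable {E F : Type*} [NormedAddCommGroup E] [NormedSpace ℝ E]
  [NormedAddCommGroup F] [NormedSpace ℝ F]

theorem iteratedDeriv_comp_smul_right {f : E → F} {k : ℕ} (hf : ContDiff ℝ k f) (v : E) (t : ℝ) :
    iteratedDeriv k (fun s : ℝ => f (s • v)) t = iteratedFDeriv ℝ k f (t • v) fun _ => v := by
  let L : ℝ →L[ℝ] E := ContinuousLinearMap.toSpanSingleton ℝ v
  change iteratedDeriv k (f ∘ L) t = _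
  rw [iteratedDeriv_eq_iteratedFDeriv, L.iteratedFDeriv_comp_right hf t le_rfl]
  simp [L]

theorem iteratedDeriv_pow_smul_const (k : ℕ) (c : F) (t : ℝ) :
    iteratedDeriv k (fun s : ℝ => s ^ k • c) t = k.factorial • c := by
  rw [iteratedDeriv_smul_const (contDiffAt_id.pow k)]
  simp [Nat.descFactorial_self, Nat.cast_smul_eq_nsmul]

theorem iteratedDeriv_zero_eq_of_eq_pow_smul_of_pos {g : ℝ → F} {k : ℕ} (hg : ContDiff ℝ k g)
    (c : F) (h : ∀ t : ℝ, 0 < t → g t = t ^ k • c) : iteratedDeriv k g 0 = k.factorial • c := by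
  have hpos : Set.EqOn (iteratedDeriv k g) (fun _ => k.factorial • c) (Set.Ioi 0) := by
    intro t ht
    rw [← iteratedDeriv_pow_smul_const k c t]
    exact Set.EqOn.iteratedDeriv_of_isOpen h isOpen_Ioi k ht
  exact hpos.closure (hg.continuous_iteratedDeriv k le_rfl) continuous_const (by simp)

theorem factorial_smul_eq_iteratedFDeriv_zero {f : E → F} {k : ℕ} (hf : ContDiff ℝ k f)
    (hhom : ∀ v : E, ∀ t : ℝ, 0 < t → f (t • v) = t ^ k • f v) (v : E) :
    k.factorial • f v = iteratedFDeriv ℝ k f 0 fun _ => v := by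
  have hray : ContDiff ℝ k fun s : ℝ => f (s • v) :=
    hf.comp ((ContinuousLinearMap.toSpanSingleton ℝ v).contDiff)
  rw [← iteratedDeriv_zero_eq_of_eq_pow_smul_of_pos hray (f v) (hhom v),
    iteratedDeriv_comp_smul_right hf v 0, zero_smul]

end Ray

namespace MultilinearMap

variable {R σ : Type*} [CommSemiring R] [Fintype σ] [DecidableEq σ] {k : ℕ}
  (f : MultilinearMap R (fun _ : Fin k => σ → R) R)

noncomputable def diagonalMvPolynomial : MvPolynomial σ R :=
  ∑ d : Fin k → σ, C (f fun i => Pi.single (d i) 1) * ∏ i, X (d i)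

theorem isHomogeneous_diagonalMvPolynomial : f.diagonalMvPolynomial.IsHomogeneous k := by
  refine IsHomogeneous.sum _ _ _ fun d _ => IsHomogeneous.C_mul ?_ _
  simpa using IsHomogeneous.prod Finset.univ (fun i => X (d i)) (fun _ => 1)
    fun i _ => isHomogeneous_X R (d i)

theorem eval_diagonalMvPolynomial (v : σ → R) :
    eval v f.diagonalMvPolynomial = f fun _ => v := by
  have hv : v = ∑ j, v j • Pi.single j 1 := by
    ext x
    simp [Pi.single_apply]
  conv_rhs => rw [hv, f.map_sum]
  rw [diagonalMvPolynomial, _root_.map_sum]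
  refine Finset.sum_congr rfl fun d _ => ?_
  simp [f.map_smul_univ, mul_comm]

end MultilinearMap

/-- A function of class `C^k` on all of ℝⁿ that is positively homogeneous of degree `k`
is a homogeneous polynomial of degree `k`. -/
theorem homogeneous_Ck_is_polynomial {n k : ℕ} (φ : (Fin n → ℝ) → ℝ)
    (hφ : ContDiff ℝ k φ)
    (hhom : ∀ v : Fin n → ℝ, ∀ t : ℝ, 0 < t → φ (t • v) = t ^ k * φ v) :
    ∃ P : MvPolynomial (Fin n) ℝ, P.IsHomogeneous k ∧ ∀ v, φ v = MvPolynomial.eval v P := by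
  let M := (iteratedFDeriv ℝ k φ 0).toMultilinearMap
  refine ⟨C (k.factorial : ℝ)⁻¹ * M.diagonalMvPolynomial,
    M.isHomogeneous_diagonalMvPolynomial.C_mul _, fun v => ?_⟩
  have hdiag : k.factorial • φ v = M fun _ => v := factorial_smul_eq_iteratedFDeriv_zero hφ hhom v
  rw [eval_mul, eval_C, M.eval_diagonalMvPolynomial, ← hdiag, nsmul_eq_mul,
    inv_mul_cancel_left₀ (Nat.cast_ne_zero.mpr k.factorial_ne_zero)]
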